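/- arXiv:math/0610385 — 3 statements merged into one kernel-verified Lean document; each statement's English description precedes it below -/
import Mathlib

section
/- Let (k_1, ..., k_m) be a partition of k with k+m ≤ n, and let p_1, ..., p_m be vertex-disjoint paths in K_n of lengths k_1, ..., k_m respectively (length = number of edges). Then the number of Hamiltonian cycles of K_n containing all edges of all the paths p_1, ..., p_m equals 2^{m-1} · (n-k-1)!. -/
def isHamCycle (n : ℕ) (H : Finset (Sym2 (Fin n))) : Prop :=
  ∃ σ : Equiv.Perm (Fin n), σ.IsCycle ∧ σ.support = Finset.univ ∧
    H = Finset.image (fun i => s(i, σ i)) Finset.univ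

/-- The edge set of a path with `m` edges given by its vertex sequence. -/
def pathEdges (n m : ℕ) (p : Fin (m + 1) → Fin n) : Finset (Sym2 (Fin n)) :=
  Finset.image (fun i : Fin m => s(p i.castSucc, p i.succ)) Finset.univ

/-!
A Hamiltonian cycle of `K_n` is the edge set of a cyclic permutation `σ` of `Fin n`, and of
exactly one of `σ`, `σ⁻¹` once the direction of the first edge of one path is prescribed.
A cyclic permutation whose edges contain the paths runs through each of them in one of two
directions; once these are fixed, the `k` requirements `σ u = v` along the directed path edges
form a linear forest. Contracting its edges one at a time (`σ ↦ swap a (σ a) * σ` removes `a`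
from the cycle) leaves cyclic permutations of `n - k` points, of which there are `(n - k - 1)!`.
The remaining `m - 1` paths contribute the factor `2 ^ (m - 1)`.
-/

open Equiv Finset
open scoped Nat

namespace Equiv.Perm

section CyclesOn

variable {α : Type*} [DecidableEq α] [Fintype α]

open Classical in
/-- Following `IsCycleOn`, this contains the identity when `s` is a subsingleton, which makes
`card_cyclesOn` hold without exceptions. -/
noncomputable def cyclesOn (s : Finset α) : Finset (Perm α) :=
  {σ | σ.IsCycleOn s ∧ σ.support ⊆ s}

@[simp]
theorem mem_cyclesOn {σ : Perm α} {s : Finset α} :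
    σ ∈ cyclesOn s ↔ σ.IsCycleOn s ∧ σ.support ⊆ s := by
  simp [cyclesOn]

theorem inv_mem_cyclesOn {σ : Perm α} {s : Finset α} (hσ : σ ∈ cyclesOn s) :
    σ⁻¹ ∈ cyclesOn s := by
  simpa [support_inv] using hσ

theorem apply_mem_iff_of_support_subset {σ : Perm α} {s : Finset α} (h : σ.support ⊆ s)
    (x : α) : σ x ∈ s ↔ x ∈ s := by
  by_cases hx : σ x = x
  · rw [hx]
  · exact iff_of_true (h (apply_mem_support.2 (mem_support.2 hx))) (h (mem_support.2 hx))

theorem IsCycle.mem_cyclesOn_support {σ : Perm α} (hσ : σ.IsCycle) : σ ∈ cyclesOn σ.support :=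
  mem_cyclesOn.2 ⟨by simpa [coe_support_eq_set_support] using hσ.isCycleOn, subset_rfl⟩

theorem isCycle_and_support_eq_of_mem_cyclesOn {σ : Perm α} {s : Finset α}
    (hσ : σ ∈ cyclesOn s) (hs : s.Nontrivial) : σ.IsCycle ∧ σ.support = s := by
  obtain ⟨hcyc, hsupp⟩ := mem_cyclesOn.1 hσ
  exact ⟨isCycle_iff_exists_isCycleOn.2 ⟨s, hs, hcyc, fun x hx => hsupp (mem_support.2 hx)⟩,
    hsupp.antisymm fun x hx => mem_support.2 (hcyc.apply_ne hs hx)⟩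

theorem apply_apply_eq_self_iff_of_mem_cyclesOn {σ : Perm α} {s : Finset α}
    (hσ : σ ∈ cyclesOn s) {x : α} (hx : x ∈ s) : σ (σ x) = x ↔ #s ∣ 2 := by
  rw [← (mem_cyclesOn.1 hσ).1.pow_apply_eq hx, pow_two, mul_apply]

theorem swap_mul_mem_cyclesOn_erase {σ : Perm α} {s : Finset α} {a : α} (hσ : σ ∈ cyclesOn s)
    (ha : a ∈ s) (hσa : σ a ≠ a) : swap a (σ a) * σ ∈ cyclesOn (s.erase a) := by
  have hs : s.Nontrivial := ⟨a, ha, σ a, (mem_cyclesOn.1 hσ).1.apply_mem_iff.2 ha, hσa.symm⟩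
  obtain ⟨hcyc, rfl⟩ := isCycle_and_support_eq_of_mem_cyclesOn hσ hs
  by_cases h2 : σ (σ a) = a
  · have hone : swap a (σ a) * σ = 1 :=
      mul_eq_one_iff_inv_eq.2 (by rw [swap_inv, ← hcyc.eq_swap_of_apply_apply_eq_self hσa h2])
    have hcard : #(σ.support.erase a) ≤ 1 := by
      have := Nat.le_of_dvd two_pos ((apply_apply_eq_self_iff_of_mem_cyclesOn hσ ha).1 h2)
      rw [card_erase_of_mem ha]
      omega
    rw [hone, mem_cyclesOn, isCycleOn_one, support_one]
    exact ⟨fun x hx y hy => card_le_one.1 hcard x hx y hy, empty_subset _⟩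
  · have := (hcyc.swap_mul hσa h2).mem_cyclesOn_support
    rwa [support_swap_mul_eq σ a h2, sdiff_singleton_eq_erase] at this

theorem swap_mul_mem_cyclesOn_insert {τ : Perm α} {t : Finset α} {a b : α}
    (hτ : τ ∈ cyclesOn t) (ha : a ∉ t) (hb : b ∈ t) : swap a b * τ ∈ cyclesOn (insert a t) := by
  obtain ⟨hcyc, hsupp⟩ := mem_cyclesOn.1 hτ
  have hτa : τ a = a := notMem_support.1 fun h => ha (hsupp h)
  set σ := swap a b * τ
  have hσa : σ a = b := by simp [σ, hτa]
  -- `σ` agrees with `τ` except that it makes the detour `τ⁻¹ b ↦ a ↦ b`.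
  have hstep : ∀ x ∈ t, σ.SameCycle x (τ x) := by
    intro x hx
    have hτx : τ x ≠ a := fun h => ha (h ▸ hcyc.apply_mem_iff.2 hx)
    by_cases hτxb : τ x = b
    · have hσx : σ x = a := by simp [σ, hτxb]
      have := (SameCycle.refl σ x).apply_right.apply_right
      rwa [hσx, hσa, ← hτxb] at this
    · exact ⟨1, by simp [σ, swap_apply_of_ne_of_ne hτx hτxb]⟩
  have hpow : ∀ x ∈ t, ∀ n : ℕ, σ.SameCycle x ((τ ^ n) x) := by
    intro x hx n
    induction n with
    | zero => exact SameCycle.refl σ x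
    | succ n ih =>
      rw [pow_succ', mul_apply]
      exact ih.trans (hstep _ ((hcyc.1.perm_pow n).mapsTo hx))
  have hbσ : ∀ y ∈ insert a t, σ.SameCycle b y := by
    intro y hy
    rcases mem_insert.1 hy with rfl | hy
    · exact ⟨-1, by simp [← hσa]⟩
    · obtain ⟨n, -, rfl⟩ := hcyc.exists_pow_eq hb hy
      exact hpow b hb n
  have hsupp' : σ.support ⊆ insert a t := by
    intro x hx
    by_contra hxt
    have hxa : x ≠ a := fun h => hxt (h ▸ mem_insert_self a t)
    have hxb : x ≠ b := fun h => hxt (h ▸ mem_insert_of_mem hb)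
    have hτx : τ x = x := notMem_support.1 fun h => hxt (mem_insert_of_mem (hsupp h))
    exact mem_support.1 hx (by simp [σ, hτx, swap_apply_of_ne_of_ne hxa hxb])
  exact mem_cyclesOn.2 ⟨⟨σ.bijOn (apply_mem_iff_of_support_subset hsupp'),
    fun x hx y hy => (hbσ x hx).symm.trans (hbσ y hy)⟩, hsupp'⟩

theorem card_filter_cyclesOn_apply_eq {s : Finset α} {a b : α} (ha : a ∈ s) (hb : b ∈ s)
    (hab : a ≠ b) (P : Perm α → Prop) [DecidablePred P] (hP : ∀ σ, P (swap a b * σ) ↔ P σ) :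
    #{σ ∈ cyclesOn s | σ a = b ∧ P σ} = #{τ ∈ cyclesOn (s.erase a) | P τ} := by
  refine card_nbij' (swap a b * ·) (swap a b * ·) ?_ ?_
    (fun σ _ => swap_mul_self_mul a b σ) (fun τ _ => swap_mul_self_mul a b τ)
  · rintro σ hσ
    simp only [mem_coe, mem_filter] at hσ ⊢
    obtain ⟨hσ, rfl, hPσ⟩ := hσ
    exact ⟨swap_mul_mem_cyclesOn_erase hσ ha hab.symm, (hP σ).2 hPσ⟩
  · rintro τ hτ
    simp only [mem_coe, mem_filter] at hτ ⊢
    obtain ⟨hτ, hPτ⟩ := hτ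
    have hτa : τ a = a := notMem_support.1 fun h => notMem_erase a s ((mem_cyclesOn.1 hτ).2 h)
    refine ⟨?_, by simp [hτa], (hP τ).2 hPτ⟩
    simpa [insert_erase ha] using
      swap_mul_mem_cyclesOn_insert hτ (notMem_erase a s) (mem_erase.2 ⟨hab.symm, hb⟩)

theorem card_cyclesOn (s : Finset α) : #(cyclesOn s) = (#s - 1)! := by
  induction s using Finset.strongInduction with
  | H s ih =>
  rcases le_or_gt #s 1 with hs | hs
  · have : cyclesOn s = {1} := by
      ext σ
      simp only [mem_cyclesOn, mem_singleton]
      refine ⟨fun h => card_support_le_one.1 ((card_le_card h.2).trans hs), ?_⟩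
      rintro rfl
      exact ⟨isCycleOn_one.2 fun x hx y hy => card_le_one.1 hs x hx y hy, by simp⟩
    rw [this, card_singleton, Nat.sub_eq_zero_of_le hs, Nat.factorial_zero]
  · obtain ⟨a, ha⟩ : s.Nonempty := card_pos.1 (by omega)
    have hnt : s.Nontrivial := one_lt_card_iff_nontrivial.1 hs
    have hfib : ∀ b ∈ s.erase a, #{σ ∈ cyclesOn s | σ a = b} = (#s - 2)! := by
      intro b hb
      obtain ⟨hba, hb⟩ := mem_erase.1 hb
      have := card_filter_cyclesOn_apply_eq ha hb hba.symm (fun _ => True) (fun _ => Iff.rfl)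
      simp only [and_true, filter_true] at this
      rw [this, ih _ (erase_ssubset ha), card_erase_of_mem ha]
      rfl
    rw [card_eq_sum_card_fiberwise (f := fun σ => σ a) (t := s.erase a), sum_congr rfl hfib,
      sum_const, card_erase_of_mem ha, smul_eq_mul]
    · rw [show #s - 2 = #s - 1 - 1 by omega, Nat.mul_factorial_pred (by omega)]
    · intro σ hσ
      have hcyc := (mem_cyclesOn.1 hσ).1
      exact mem_erase.2 ⟨hcyc.apply_ne hnt ha, hcyc.apply_mem_iff.2 ha⟩

theorem card_filter_cyclesOn_forall_apply_eq {ι : Type*} [DecidableEq ι] (s : Finset α)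
    (E : Finset ι) (u v : ι → α) (ρ : ι → ℕ) (hu : Set.InjOn u E) (hv : Set.InjOn v E)
    (hus : ∀ z ∈ E, u z ∈ s) (hvs : ∀ z ∈ E, v z ∈ s)
    (hρ : ∀ z ∈ E, ∀ z' ∈ E, v z = u z' → ρ z < ρ z') :
    #{σ ∈ cyclesOn s | ∀ z ∈ E, σ (u z) = v z} = (#s - #E - 1)! := by
  induction E using Finset.strongInduction generalizing s with
  | H E ih =>
  rcases E.eq_empty_or_nonempty with rfl | hE
  · simpa using card_cyclesOn s
  -- An edge of minimal rank starts a path: no edge of `E` ends at its source.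
  obtain ⟨z₀, hz₀, hmin⟩ := E.exists_min_image ρ hE
  have hv_ne_u : ∀ z ∈ E, v z ≠ u z₀ := fun z hz h => (hρ z hz z₀ hz₀ h).not_ge (hmin z hz)
  have hE' : ∀ z ∈ E.erase z₀, z ∈ E := fun z hz => mem_of_mem_erase hz
  calc #{σ ∈ cyclesOn s | ∀ z ∈ E, σ (u z) = v z}
      = #{σ ∈ cyclesOn s | σ (u z₀) = v z₀ ∧ ∀ z ∈ E.erase z₀, σ (u z) = v z} := by
        rw [← insert_erase hz₀]
        simp only [forall_mem_insert, erase_insert_eq_erase, erase_idem]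
    _ = #{τ ∈ cyclesOn (s.erase (u z₀)) | ∀ z ∈ E.erase z₀, τ (u z) = v z} := by
        refine card_filter_cyclesOn_apply_eq (hus z₀ hz₀) (hvs z₀ hz₀)
          (fun h => hv_ne_u z₀ hz₀ h.symm) _ fun σ => forall₂_congr fun z hz => ?_
        have hb : v z ≠ v z₀ := fun h => ne_of_mem_erase hz (hv (hE' z hz) hz₀ h)
        rw [mul_apply, swap_apply_eq_iff, swap_apply_of_ne_of_ne (hv_ne_u z (hE' z hz)) hb]
    _ = (#(s.erase (u z₀)) - #(E.erase z₀) - 1)! := by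
        refine ih _ (erase_ssubset hz₀) _ (hu.mono fun z hz => hE' z hz)
          (hv.mono fun z hz => hE' z hz) (fun z hz => mem_erase.2 ⟨?_, hus z (hE' z hz)⟩)
          (fun z hz => mem_erase.2 ⟨hv_ne_u z (hE' z hz), hvs z (hE' z hz)⟩)
          (fun z hz z' hz' => hρ z (hE' z hz) z' (hE' z' hz'))
        exact fun h => ne_of_mem_erase hz (hu (hE' z hz) hz₀ h)
    _ = (#s - #E - 1)! := by
        rw [card_erase_of_mem (hus z₀ hz₀), card_erase_of_mem hz₀]
        have := hE.card_pos
        congr 1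
        omega

end CyclesOn

section Traverses

def Traverses {β : Type*} (σ : Perm β) {l : ℕ} (q : Fin (l + 1) → β) : Prop :=
  ∀ i : Fin l, σ (q i.castSucc) = q i.succ

instance {β : Type*} [DecidableEq β] (σ : Perm β) {l : ℕ} (q : Fin (l + 1) → β) :
    Decidable (σ.Traverses q) :=
  inferInstanceAs (Decidable (∀ _, _))

theorem traverses_inv_iff {β : Type*} {σ : Perm β} {l : ℕ} {q : Fin (l + 1) → β} :
    σ⁻¹.Traverses q ↔ σ.Traverses (q ∘ Fin.rev) := by
  simp only [Traverses, Function.comp_apply, Fin.rev_castSucc, Fin.rev_succ, inv_eq_iff_eq]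
  exact ⟨fun h i => (h i.rev).symm, fun h i => by simpa using (h i.rev).symm⟩

theorem traverses_of_apply_zero {β : Type*} {σ : Perm β} {l : ℕ} {q : Fin (l + 1) → β}
    (hq : Function.Injective q)
    (hadj : ∀ i : Fin l, σ (q i.castSucc) = q i.succ ∨ σ (q i.succ) = q i.castSucc)
    (h0 : σ (q 0) = q 1) : σ.Traverses q := by
  suffices ∀ i (hi : i < l), σ (q ⟨i, by omega⟩) = q ⟨i + 1, by omega⟩ from fun i => this i i.2
  intro i hi
  induction i with
  | zero =>
    obtain ⟨l, rfl⟩ := Nat.exists_eq_add_of_le' hi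
    exact h0
  | succ i ih =>
    refine (hadj ⟨i + 1, hi⟩).resolve_right fun h => ?_
    have := congrArg Fin.val (hq (σ.injective (h.trans (ih (by omega)).symm)))
    simp at this
    omega

theorem card_filter_cyclesOn_univ_forall_traverses {α κ : Type*} [DecidableEq α] [Fintype α]
    [DecidableEq κ] [Fintype κ] (ℓ : κ → ℕ) (q : ∀ j, Fin (ℓ j + 1) → α)
    (hinj : ∀ j, Function.Injective (q j)) (hdisj : ∀ j j', j ≠ j' → ∀ a b, q j a ≠ q j' b) :
    #{σ ∈ cyclesOn univ | ∀ j, σ.Traverses (q j)} = (Fintype.card α - ∑ j, ℓ j - 1)! := by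
  have same_path {j j' a b} (h : q j a = q j' b) : j = j' :=
    by_contra fun hne => hdisj j j' hne a b h
  have hcount := card_filter_cyclesOn_forall_apply_eq univ (univ : Finset (Σ j, Fin (ℓ j)))
    (fun z => q z.1 z.2.castSucc) (fun z => q z.1 z.2.succ) (fun z => z.2) ?inj_u ?inj_v
    (fun _ _ => mem_univ _) (fun _ _ => mem_univ _) ?rank
  · rw [card_univ, card_univ, Fintype.card_sigma] at hcount
    simp only [Fintype.card_fin] at hcount
    rw [← hcount]
    congr 1
    ext σ
    simp only [mem_filter]
    exact and_congr_right fun _ => ⟨fun h z _ => h z.1 z.2, fun h j i => h ⟨j, i⟩ (mem_univ _)⟩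
  all_goals
    rintro ⟨j, i⟩ - ⟨j', i'⟩ - h
    obtain rfl := same_path h
    have hii' := hinj j h
  case inj_u => exact congrArg (Sigma.mk j) (Fin.castSucc_inj.1 hii')
  case inj_v => exact congrArg (Sigma.mk j) (Fin.succ_inj.1 hii')
  case rank =>
    have := congrArg Fin.val hii'
    simp only [Fin.val_succ, Fin.val_castSucc] at this
    change (i : ℕ) < i'
    omega

end Traverses

section Edges

variable {α : Type*} [DecidableEq α] [Fintype α]

def edges (σ : Perm α) : Finset (Sym2 α) :=
  univ.image fun x => s(x, σ x)

theorem mk_mem_edges {σ : Perm α} {x y : α} : s(x, y) ∈ σ.edges ↔ σ x = y ∨ σ y = x := by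
  simp only [edges, mem_image, mem_univ, true_and, Sym2.eq_iff]
  constructor
  · rintro ⟨z, ⟨rfl, rfl⟩ | ⟨rfl, rfl⟩⟩ <;> simp
  · rintro (rfl | rfl) <;> simp

theorem edges_inv (σ : Perm α) : σ⁻¹.edges = σ.edges := by
  ext e
  induction e using Sym2.ind with
  | _ x y =>
    rw [mk_mem_edges, mk_mem_edges, inv_eq_iff_eq, inv_eq_iff_eq, eq_comm (a := x),
      eq_comm (a := y), or_comm]

theorem eq_of_edges_eq_of_apply_eq {σ τ : Perm α} (hσ : σ ∈ cyclesOn univ)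
    (hτ : τ ∈ cyclesOn univ) (he : σ.edges = τ.edges) {x : α} (hx : σ x = τ x) : σ = τ := by
  have hstep : ∀ y, σ y = τ y → σ (σ y) = τ (σ y) := by
    intro y hy
    have hmem : s(σ y, τ (σ y)) ∈ σ.edges := he ▸ mk_mem_edges.2 (Or.inl rfl)
    rcases mk_mem_edges.1 hmem with h | h
    · exact h
    · -- `τ` sends `y` to `σ y` and back, so there are at most two points.
      have hτσy : τ (σ y) = y := σ.injective h
      have h2 : τ (τ y) = y := by rw [← hy, hτσy]
      rw [hτσy, (apply_apply_eq_self_iff_of_mem_cyclesOn hσ (mem_univ y)).2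
        ((apply_apply_eq_self_iff_of_mem_cyclesOn hτ (mem_univ y)).1 h2)]
  have hpow : ∀ n : ℕ, σ ((σ ^ n) x) = τ ((σ ^ n) x) := by
    intro n
    induction n with
    | zero => exact hx
    | succ n ih => rw [pow_succ', mul_apply]; exact hstep _ ih
  ext y
  obtain ⟨n, -, rfl⟩ := (mem_cyclesOn.1 hσ).1.exists_pow_eq (mem_univ x) (mem_univ y)
  exact hpow n

end Edges

end Equiv.Perm

section HamiltonianCycles

open Equiv.Perm

variable {n : ℕ}

theorem pathEdges_subset_edges_iff {l : ℕ} {σ : Perm (Fin n)} {q : Fin (l + 1) → Fin n} :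
    pathEdges n l q ⊆ σ.edges ↔
      ∀ i : Fin l, σ (q i.castSucc) = q i.succ ∨ σ (q i.succ) = q i.castSucc := by
  simp [pathEdges, image_subset_iff, mk_mem_edges]

theorem mk_mem_pathEdges_zero_one {l : ℕ} (hl : 1 ≤ l) (q : Fin (l + 1) → Fin n) :
    s(q 0, q 1) ∈ pathEdges n l q := by
  obtain ⟨l, rfl⟩ := Nat.exists_eq_add_of_le' hl
  exact mem_image.2 ⟨0, mem_univ _, by rw [Fin.castSucc_zero, Fin.succ_zero_eq_one]⟩

theorem traverses_iff_pathEdges_subset {l : ℕ} (hl : 1 ≤ l) {σ : Perm (Fin n)}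
    {q : Fin (l + 1) → Fin n} (hq : Function.Injective q) :
    σ.Traverses q ↔ pathEdges n l q ⊆ σ.edges ∧ σ (q 0) = q 1 := by
  obtain ⟨l, rfl⟩ := Nat.exists_eq_add_of_le' hl
  exact ⟨fun h => ⟨pathEdges_subset_edges_iff.2 fun i => Or.inl (h i), h 0⟩,
    fun h => traverses_of_apply_zero hq (pathEdges_subset_edges_iff.1 h.1) h.2⟩

theorem traverses_inv_iff_pathEdges_subset {l : ℕ} (hl : 1 ≤ l) {σ : Perm (Fin n)}
    {q : Fin (l + 1) → Fin n} (hq : Function.Injective q) (hσ : σ (σ (q 0)) ≠ q 0) :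
    σ⁻¹.Traverses q ↔ pathEdges n l q ⊆ σ.edges ∧ σ (q 0) ≠ q 1 := by
  rw [traverses_iff_pathEdges_subset hl hq, edges_inv, inv_eq_iff_eq]
  refine and_congr_right fun h => ⟨fun h1 h0 => hσ (by rw [h0, ← h1]), fun h0 => ?_⟩
  obtain ⟨l, rfl⟩ := Nat.exists_eq_add_of_le' hl
  exact ((pathEdges_subset_edges_iff.1 h 0).resolve_left h0).symm

theorem pathEdges_subset_edges_and_decide_eq_iff {l : ℕ} (hl : 1 ≤ l) {σ : Perm (Fin n)}
    {q : Fin (l + 1) → Fin n} (hq : Function.Injective q) (b : Bool)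
    (hb : b = false → σ (σ (q 0)) ≠ q 0) :
    pathEdges n l q ⊆ σ.edges ∧ decide (σ (q 0) = q 1) = b ↔
      σ.Traverses (if b then q else q ∘ Fin.rev) := by
  cases b
  · simp [← traverses_inv_iff, traverses_inv_iff_pathEdges_subset hl hq (hb rfl)]
  · simp [traverses_iff_pathEdges_subset hl hq]

theorem isHamCycle_iff (hn : 2 ≤ n) {H : Finset (Sym2 (Fin n))} :
    isHamCycle n H ↔ ∃ σ ∈ cyclesOn univ, σ.edges = H := by
  have hnt : (univ : Finset (Fin n)).Nontrivial :=
    univ_nontrivial_iff.2 (Fin.nontrivial_iff_two_le.2 hn)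
  constructor
  · rintro ⟨σ, hcyc, hsupp, rfl⟩
    exact ⟨σ, hsupp ▸ hcyc.mem_cyclesOn_support, rfl⟩
  · rintro ⟨σ, hσ, rfl⟩
    obtain ⟨hcyc, hsupp⟩ := isCycle_and_support_eq_of_mem_cyclesOn hσ hnt
    exact ⟨σ, hcyc, hsupp, rfl⟩

/-- Each Hamiltonian cycle through `s(x, y)` is the edge set of exactly one cyclic permutation
sending `x` to `y`. -/
theorem nat_card_isHamCycle_eq_card_filter_cyclesOn (hn : 2 ≤ n)
    (C : Finset (Sym2 (Fin n)) → Prop) [DecidablePred C] {x y : Fin n}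
    (hC : ∀ H, C H → s(x, y) ∈ H) :
    Nat.card {H // isHamCycle n H ∧ C H} = #{σ ∈ cyclesOn univ | C σ.edges ∧ σ x = y} := by
  classical
  rw [Nat.card_eq_fintype_card, Fintype.card_subtype, ← card_image_of_injOn (f := edges)]
  · congr 1
    ext H
    simp only [mem_filter, mem_univ, true_and, mem_image, isHamCycle_iff hn]
    constructor
    · rintro ⟨⟨σ, hσ, rfl⟩, hCH⟩
      rcases mk_mem_edges.1 (hC _ hCH) with hxy | hyx
      · exact ⟨σ, ⟨hσ, hCH, hxy⟩, rfl⟩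
      · exact ⟨σ⁻¹, ⟨inv_mem_cyclesOn hσ, by rwa [edges_inv], inv_eq_iff_eq.2 hyx.symm⟩,
          edges_inv σ⟩
    · rintro ⟨σ, ⟨hσ, hCH, -⟩, rfl⟩
      exact ⟨⟨σ, hσ, rfl⟩, hCH⟩
  · intro σ hσ τ hτ he
    simp only [mem_coe, mem_filter] at hσ hτ
    exact eq_of_edges_eq_of_apply_eq hσ.1 hτ.1 he (hσ.2.2.trans hτ.2.2.symm)

theorem card_filter_cyclesOn_pathEdges_subset_orientation_eq {m : ℕ} {ks : Fin m → ℕ}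
    {p : ∀ j, Fin (ks j + 1) → Fin n} (hks : ∀ j, 1 ≤ ks j) (hinj : ∀ j, Function.Injective (p j))
    (hdisj : ∀ j j', j ≠ j' → ∀ a b, p j a ≠ p j' b) (hn : ∑ j, ks j < n) {ε : Fin m → Bool}
    {j₀ : Fin m} (hε₀ : ε j₀ = true) :
    #{σ ∈ cyclesOn univ | ((∀ j, pathEdges n (ks j) (p j) ⊆ σ.edges) ∧ σ (p j₀ 0) = p j₀ 1) ∧
      (fun j => decide (σ (p j 0) = p j 1)) = ε} = (n - ∑ j, ks j - 1)! := by
  have hinj' : ∀ j, Function.Injective (if ε j then p j else p j ∘ Fin.rev) := fun j => by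
    split_ifs
    exacts [hinj j, (hinj j).comp Fin.rev_injective]
  have hdisj' : ∀ j j', j ≠ j' → ∀ a b, (if ε j then p j else p j ∘ Fin.rev) a ≠
      (if ε j' then p j' else p j' ∘ Fin.rev) b := fun j j' hne a b => by
    split_ifs <;> exact hdisj j j' hne _ _
  have hcount := card_filter_cyclesOn_univ_forall_traverses ks _ hinj' hdisj'
  rw [Fintype.card_fin] at hcount
  rw [← hcount]
  congr 1
  ext σ
  simp only [mem_filter, and_assoc, funext_iff]
  refine and_congr_right fun hσ => ?_
  -- A reversed path `j ≠ j₀` makes `n > ks j + ks j₀ ≥ 2`, so no edge is run both ways.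
  have hnd : ∀ j, ε j = false → σ (σ (p j 0)) ≠ p j 0 := fun j hj h => by
    have hne : j ≠ j₀ := by rintro rfl; simp [hε₀] at hj
    have h2 := Nat.le_of_dvd two_pos ((apply_apply_eq_self_iff_of_mem_cyclesOn hσ (mem_univ _)).1 h)
    have hpair := sum_le_sum_of_subset (f := ks) (subset_univ {j, j₀})
    rw [sum_pair hne] at hpair
    rw [card_univ, Fintype.card_fin] at h2
    have := hks j
    have := hks j₀
    omega
  simp_rw [← fun j => pathEdges_subset_edges_and_decide_eq_iff (hks j) (hinj j) (ε j) (hnd j),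
    forall_and]
  exact ⟨fun ⟨hA, _, hD⟩ => ⟨hA, hD⟩, fun ⟨hA, hD⟩ => ⟨hA, by simpa [hε₀] using hD j₀, hD⟩⟩

end HamiltonianCycles

theorem ham_cycles_through_disjoint_paths (n k m : ℕ) (hm : 1 ≤ m)
    (ks : Fin m → ℕ) (hks : ∀ j, 1 ≤ ks j) (hsum : ∑ j, ks j = k)
    (hkm : k + m ≤ n)
    (p : ∀ j : Fin m, Fin (ks j + 1) → Fin n)
    (hinj : ∀ j, Function.Injective (p j))
    (hdisj : ∀ j j', j ≠ j' → ∀ a b, p j a ≠ p j' b) :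
    Nat.card {H : Finset (Sym2 (Fin n)) //
        isHamCycle n H ∧ ∀ j, pathEdges n (ks j) (p j) ⊆ H} =
      2 ^ (m - 1) * Nat.factorial (n - k - 1) := by
  classical
  have hmk : m ≤ k := hsum ▸ by simpa using sum_le_sum fun j (_ : j ∈ univ) => hks j
  set j₀ : Fin m := ⟨0, hm⟩
  rw [nat_card_isHamCycle_eq_card_filter_cyclesOn (by omega) _
      fun H hH => hH j₀ (mk_mem_pathEdges_zero_one (hks j₀) _),
    card_eq_sum_card_fiberwise (f := fun σ j => decide (σ (p j 0) = p j 1))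
      (t := {ε | ε j₀ = true}) fun σ hσ => mem_filter.2 ⟨mem_univ _, decide_eq_true (mem_filter.1 hσ).2.2⟩,
    sum_congr rfl fun ε hε => by
      rw [filter_filter, card_filter_cyclesOn_pathEdges_subset_orientation_eq hks hinj hdisj
        (by omega) (mem_filter.1 hε).2],
    sum_const, smul_eq_mul, ← Fintype.piFinset_univ,
    Fintype.card_filter_piFinset_const_eq_of_mem _ _ (mem_univ _), card_univ, Fintype.card_bool,
    Fintype.card_fin, hsum]
end

section
/- Let m_1, ..., m_p be nonnegative integers and n a positive integer with n ≥ Σ_{i=1}^p (i+1)·m_i. The number of ways to choose, inside a path on n vertices, a family of pairwise vertex-disjoint subpaths consisting of m_i paths of length i for each i = 1,...,p, equals (n - Σ_{i=1}^p i·m_i)_{(Σ_{i=1}^p m_i)} / ∏_{i=1}^p m_i!, where (a)_{(b)} = a(a-1)···(a-b+1) denotes the falling factorial. -/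
/-!
Record each subpath by its left end and contract it to that vertex. A subpath of length `ℓ` loses
`ℓ` vertices, so packings with `m i` subpaths of length `ℓ i` correspond to families of pairwise
disjoint sets of sizes `m i` in a path on `N = n - ∑ ℓ i * m i` vertices: the inverse map sends a
point `s` to `s` plus the total length of the subpaths contracted to points left of `s`.
Ordering each set of such a family turns it into an injection of `∑ m i` labelled points into `N`
vertices, whence `N.descFactorial (∑ m i) / ∏ (m i)!` families.
-/

open Finset Function
open scoped Nat

section DisjointFamilies

variable {ι α : Type*}

def disjointFamilies (s : Finset α) (m : ι → ℕ) : Set (ι → Finset α) :=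
  {T | Pairwise (Disjoint on T) ∧ (∀ i, T i ⊆ s) ∧ ∀ i, #(T i) = m i}

variable [DecidableEq α] {s : Finset α} {m : ι → ℕ}

def blockImages (g : (Σ i, Fin (m i)) ↪ s) : disjointFamilies s m where
  val i := univ.image fun x => (g ⟨i, x⟩ : α)
  property := by
    refine ⟨fun i j hij => disjoint_left.2 ?_, fun i => ?_, fun i => ?_⟩
    · simp only [mem_image, mem_univ, true_and]
      rintro _ ⟨x, rfl⟩ ⟨y, hxy⟩
      exact hij (congrArg Sigma.fst (g.injective (Subtype.ext hxy))).symm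
    · simp only [image_subset_iff, mem_univ, coe_mem, imp_self, implies_true]
    · rw [card_image_of_injective _ fun x y h => sigma_mk_injective (g.injective (Subtype.ext h)),
        card_univ, Fintype.card_fin]

def glue (T : disjointFamilies s m) (e : Π i, Fin (m i) ≃ T.1 i) : (Σ i, Fin (m i)) ↪ s where
  toFun x := ⟨e x.1 x.2, T.2.2.1 x.1 (e x.1 x.2).2⟩
  inj' := by
    rintro ⟨i, x⟩ ⟨j, y⟩ h
    have hxy : (e i x : α) = e j y := congrArg Subtype.val h
    obtain rfl : i = j := by
      by_contra hij
      exact disjoint_left.1 (T.2.1 hij) (e i x).2 (hxy ▸ (e j y).2)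
    exact congrArg (Sigma.mk i) ((e i).injective (Subtype.ext hxy))

lemma blockImages_glue (T : disjointFamilies s m) (e : Π i, Fin (m i) ≃ T.1 i) :
    blockImages (glue T e) = T := by
  refine Subtype.ext (funext fun i => Finset.ext fun b => ⟨?_, fun hb => ?_⟩)
  · simp only [blockImages, glue, mem_image, mem_univ, true_and]
    rintro ⟨x, rfl⟩
    exact (e i x).2
  · refine mem_image.2 ⟨(e i).symm ⟨b, hb⟩, mem_univ _, ?_⟩
    exact congrArg Subtype.val ((e i).apply_symm_apply ⟨b, hb⟩)

noncomputable def blockImagesFiberEquiv (T : disjointFamilies s m) :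
    {g // blockImages g = T} ≃ Π i, Fin (m i) ≃ T.1 i where
  toFun g i := Equiv.ofBijective
    (fun x => ⟨g.1 ⟨i, x⟩, by obtain ⟨g, rfl⟩ := g; exact mem_image_of_mem _ (mem_univ x)⟩)
    ((Fintype.bijective_iff_injective_and_card _).2
      ⟨fun x y h => by
        simpa using g.1.injective (Subtype.ext (by simpa using h) : g.1 ⟨i, x⟩ = g.1 ⟨i, y⟩),
        by rw [Fintype.card_fin, Fintype.card_coe, T.2.2.2 i]⟩)
  invFun e := ⟨glue T e, blockImages_glue T e⟩
  left_inv _ := rfl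
  right_inv _ := funext fun _ => Equiv.ext fun _ => rfl

theorem card_disjointFamilies_mul_prod_factorial [Fintype ι] (s : Finset α) (m : ι → ℕ) :
    Nat.card (disjointFamilies s m) * ∏ i, (m i)! = (#s).descFactorial (∑ i, m i) := by
  classical
  have : Finite (disjointFamilies s m) :=
    Finite.of_injective (fun T i => (⟨T.1 i, mem_powerset.2 (T.2.2.1 i)⟩ : s.powerset))
      fun T T' h => Subtype.ext (funext fun i => congrArg Subtype.val (congrFun h i))
  have := Fintype.ofFinite (disjointFamilies s m)
  have hfiber (T : disjointFamilies s m) : Nat.card (Π i, Fin (m i) ≃ T.1 i) = ∏ i, (m i)! := by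
    rw [Nat.card_pi]
    refine prod_congr rfl fun i _ => ?_
    rw [Nat.card_eq_fintype_card,
      Fintype.card_equiv (Fintype.equivOfCardEq (by simp [T.2.2.2 i])), Fintype.card_fin]
  calc Nat.card (disjointFamilies s m) * ∏ i, (m i)!
      = ∑ T : disjointFamilies s m, Nat.card (Π i, Fin (m i) ≃ T.1 i) := by
        simp only [hfiber, sum_const, card_univ, smul_eq_mul, Nat.card_eq_fintype_card]
    _ = Nat.card ((Σ i, Fin (m i)) ↪ s) := by
        rw [← Nat.card_congr (Equiv.sigmaFiberEquiv blockImages), Nat.card_sigma]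
        exact Fintype.sum_congr _ _ fun T => (Nat.card_congr (blockImagesFiberEquiv T)).symm
    _ = (#s).descFactorial (∑ i, m i) := by
        rw [Nat.card_eq_fintype_card, Fintype.card_embedding_eq]
        simp

end DisjointFamilies

section PathPackings

variable {ι : Type*} (ℓ : ι → ℕ) {S T : ι → Finset ℕ}

/-- `a ∈ S i` is the left end of the interval `[a, a + ℓ i]`. -/
structure IsPacking (S : ι → Finset ℕ) : Prop where
  disjoint : Pairwise (Disjoint on S)
  add_lt : ∀ ⦃i j a b⦄, a ∈ S i → b ∈ S j → a < b → a + ℓ i < b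

lemma isPacking_iff_disjoint_Icc : IsPacking ℓ S ↔ ∀ i j, ∀ a ∈ S i, ∀ b ∈ S j,
    (i ≠ j ∨ a ≠ b) → Disjoint (Icc a (a + ℓ i)) (Icc b (b + ℓ j)) := by
  refine ⟨fun hS i j a ha b hb hne => ?_, fun h => ⟨fun i j hij => ?_, fun i j a b ha hb hab => ?_⟩⟩
  · rcases lt_trichotomy a b with hab | rfl | hba
    · have := hS.add_lt ha hb hab
      exact disjoint_left.2 fun x hx hx' => by simp only [mem_Icc] at hx hx'; omega
    · exact absurd (hS.disjoint (hne.resolve_right (not_not.2 rfl)))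
        (not_disjoint_iff.2 ⟨a, ha, hb⟩)
    · have := hS.add_lt hb ha hba
      exact disjoint_left.2 fun x hx hx' => by simp only [mem_Icc] at hx hx'; omega
  · exact disjoint_left.2 fun a ha hb => disjoint_left.1 (h i j a ha a hb (.inl hij))
      (left_mem_Icc.2 (Nat.le_add_right _ _)) (left_mem_Icc.2 (Nat.le_add_right _ _))
  · by_contra! hba
    exact disjoint_left.1 (h i j a ha b hb (.inr hab.ne)) (mem_Icc.2 ⟨hab.le, hba⟩)
      (left_mem_Icc.2 (Nat.le_add_right _ _))

variable [Fintype ι]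

def weightBelow (S : ι → Finset ℕ) (x : ℕ) : ℕ := ∑ i, ∑ a ∈ S i with a < x, ℓ i

@[simp]
lemma weightBelow_zero : weightBelow ℓ S 0 = 0 := by
  simp [weightBelow]

lemma weightBelow_mono : Monotone (weightBelow ℓ S) := fun x y hxy =>
  sum_le_sum fun i _ => sum_le_sum_of_subset fun a ha => by
    simp only [mem_filter] at ha ⊢
    exact ⟨ha.1, ha.2.trans_le hxy⟩

lemma weightBelow_add_sum_Ico {x y : ℕ} (hxy : x ≤ y) :
    weightBelow ℓ S x + ∑ i, ∑ a ∈ S i with a ∈ Ico x y, ℓ i = weightBelow ℓ S y := by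
  simp only [weightBelow, sum_filter, ← sum_add_distrib, mem_Ico]
  refine sum_congr rfl fun i _ => sum_congr rfl fun a _ => ?_
  split_ifs <;> omega

lemma weightBelow_add_le {i : ι} {a x y : ℕ} (ha : a ∈ S i) (hxa : x ≤ a) (hay : a < y) :
    weightBelow ℓ S x + ℓ i ≤ weightBelow ℓ S y := by
  rw [← weightBelow_add_sum_Ico ℓ (hxa.trans hay.le), add_le_add_iff_left]
  calc ℓ i ≤ ∑ a ∈ S i with a ∈ Ico x y, ℓ i :=
        single_le_sum (f := fun _ => ℓ i) (fun _ _ => Nat.zero_le _)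
          (mem_filter.2 ⟨ha, mem_Ico.2 ⟨hxa, hay⟩⟩)
    _ ≤ _ := single_le_sum (f := fun i => ∑ a ∈ S i with a ∈ Ico x y, ℓ i)
        (fun _ _ => Nat.zero_le _) (mem_univ i)

lemma weightBelow_eq_sum {m : ι → ℕ} {x : ℕ} (hS : ∀ i, ∀ a ∈ S i, a < x)
    (hm : ∀ i, #(S i) = m i) : weightBelow ℓ S x = ∑ i, ℓ i * m i := by
  refine sum_congr rfl fun i _ => ?_
  rw [filter_true_of_mem (hS i), sum_const, hm, smul_eq_mul, mul_comm]

lemma weightBelow_image {f : ℕ → ℕ} {D : Set ℕ} (hf : StrictMonoOn f D) (hS : ∀ i, ↑(S i) ⊆ D)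
    {a : ℕ} (ha : a ∈ D) : weightBelow ℓ (fun i => (S i).image f) (f a) = weightBelow ℓ S a := by
  refine sum_congr rfl fun i _ => ?_
  rw [filter_image, sum_image fun b hb c hc => hf.injOn (hS i (mem_filter.1 hb).1)
    (hS i (mem_filter.1 hc).1)]
  exact sum_congr (filter_congr fun b hb => hf.lt_iff_lt (hS i hb) ha) fun _ _ => rfl

lemma IsPacking.sum_Ico_le (hS : IsPacking ℓ S) {x y : ℕ}
    (hend : ∀ i, ∀ a ∈ S i, a ∈ Ico x y → a + ℓ i < y) :
    ∑ i, ∑ a ∈ S i with a ∈ Ico x y, (ℓ i + 1) ≤ y - x := by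
  set P := univ.sigma fun i => (S i).filter (· ∈ Ico x y)
  have hP : ∀ q ∈ P, q.2 ∈ S q.1 ∧ q.2 ∈ Ico x y := fun q hq => by simpa [P] using hq
  have hdisj :
      (P : Set (Σ _ : ι, ℕ)).PairwiseDisjoint fun q : Σ _ : ι, ℕ => Icc q.2 (q.2 + ℓ q.1) := by
    rintro ⟨i, a⟩ hq ⟨j, b⟩ hq' hne
    refine (isPacking_iff_disjoint_Icc ℓ).1 hS i j a (hP _ hq).1 b (hP _ hq').1 ?_
    by_contra! h
    obtain ⟨rfl, rfl⟩ := h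
    exact hne rfl
  have hsub : P.biUnion (fun q => Icc q.2 (q.2 + ℓ q.1)) ⊆ Ico x y := by
    simp only [biUnion_subset_iff_forall_subset]
    intro q hq b hb
    obtain ⟨hq₁, hq₂⟩ := hP q hq
    have := hend q.1 q.2 hq₁ hq₂
    simp only [mem_Icc, mem_Ico] at hb hq₂ ⊢
    omega
  calc ∑ i, ∑ a ∈ S i with a ∈ Ico x y, (ℓ i + 1)
      = ∑ q ∈ P, #(Icc q.2 (q.2 + ℓ q.1)) := by
        rw [sum_sigma]
        refine sum_congr rfl fun i _ => sum_congr rfl fun a _ => ?_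
        rw [Nat.card_Icc]
        dsimp only
        omega
    _ = #(P.biUnion fun q => Icc q.2 (q.2 + ℓ q.1)) := (card_biUnion hdisj).symm
    _ ≤ y - x := (card_le_card hsub).trans_eq (Nat.card_Ico x y)

lemma IsPacking.weightBelow_le_of_mem (hS : IsPacking ℓ S) {i : ι} {a : ℕ} (ha : a ∈ S i) :
    weightBelow ℓ S a ≤ a := by
  have hpack := hS.sum_Ico_le ℓ (x := 0) (y := a) fun j b hb hba =>
    hS.add_lt hb ha (mem_Ico.1 hba).2
  rw [← weightBelow_add_sum_Ico ℓ (Nat.zero_le a), weightBelow_zero, zero_add, ← Nat.sub_zero a]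
  exact (sum_le_sum fun j _ => sum_le_sum fun _ _ => Nat.le_succ _).trans hpack

/-- The intervals starting in `[a, y)` fit into `[a, y)`, and there is at least one of them. -/
lemma IsPacking.weightBelow_add_lt (hS : IsPacking ℓ S) {i : ι} {a y : ℕ} (ha : a ∈ S i)
    (hay : a < y) (hend : ∀ j, ∀ b ∈ S j, b ∈ Ico a y → b + ℓ j < y) :
    weightBelow ℓ S y + a < weightBelow ℓ S a + y := by
  have hpack := hS.sum_Ico_le ℓ hend
  have hlt : ∑ j, ∑ b ∈ S j with b ∈ Ico a y, ℓ j < ∑ j, ∑ b ∈ S j with b ∈ Ico a y, (ℓ j + 1) :=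
    sum_lt_sum (fun j _ => sum_le_sum fun _ _ => Nat.le_succ _)
      ⟨i, mem_univ i, sum_lt_sum_of_nonempty ⟨a, mem_filter.2 ⟨ha, mem_Ico.2 ⟨le_rfl, hay⟩⟩⟩
        fun _ _ => Nat.lt_succ_self _⟩
  rw [← weightBelow_add_sum_Ico ℓ hay.le]
  omega

def expand (T : ι → Finset ℕ) (s : ℕ) : ℕ := s + weightBelow ℓ T s

def contract (S : ι → Finset ℕ) (a : ℕ) : ℕ := a - weightBelow ℓ S a

lemma expand_strictMono : StrictMono (expand ℓ T) := fun s t hst => by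
  have := weightBelow_mono ℓ (S := T) hst.le
  unfold expand
  omega

lemma expand_add_lt {i : ι} {s t : ℕ} (hs : s ∈ T i) (hst : s < t) :
    expand ℓ T s + ℓ i < expand ℓ T t := by
  have := weightBelow_add_le ℓ hs le_rfl hst
  unfold expand
  omega

lemma isPacking_image_expand (hT : Pairwise (Disjoint on T)) :
    IsPacking ℓ fun i => (T i).image (expand ℓ T) where
  disjoint i j hij := (disjoint_image (expand_strictMono ℓ).injective).2 (hT hij)
  add_lt := by
    intro i j _ _ ha hb hab
    obtain ⟨s, hs, rfl⟩ := mem_image.1 ha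
    obtain ⟨t, ht, rfl⟩ := mem_image.1 hb
    exact expand_add_lt ℓ hs ((expand_strictMono ℓ).lt_iff_lt.1 hab)

lemma contract_image_expand (s : ℕ) :
    contract ℓ (fun i => (T i).image (expand ℓ T)) (expand ℓ T s) = s := by
  unfold contract
  rw [weightBelow_image ℓ ((expand_strictMono ℓ).strictMonoOn Set.univ)
    (fun _ => Set.subset_univ _) (Set.mem_univ s)]
  unfold expand
  omega

lemma IsPacking.contract_strictMonoOn (hS : IsPacking ℓ S) :
    StrictMonoOn (contract ℓ S) (⋃ i, (S i : Set ℕ)) := by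
  intro a ha b hb hab
  obtain ⟨i, ha⟩ := Set.mem_iUnion.1 ha
  obtain ⟨j, hb⟩ := Set.mem_iUnion.1 hb
  have := hS.weightBelow_add_lt ℓ ha hab fun k c hc hcb => hS.add_lt hc hb (mem_Ico.1 hcb).2
  have := hS.weightBelow_le_of_mem ℓ ha
  unfold contract
  omega

lemma IsPacking.expand_image_contract (hS : IsPacking ℓ S) {i : ι} {a : ℕ} (ha : a ∈ S i) :
    expand ℓ (fun i => (S i).image (contract ℓ S)) (contract ℓ S a) = a := by
  unfold expand
  rw [weightBelow_image ℓ hS.contract_strictMonoOn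
    (Set.subset_iUnion (fun i => (S i : Set ℕ))) (Set.mem_iUnion.2 ⟨i, ha⟩)]
  have := hS.weightBelow_le_of_mem ℓ ha
  unfold contract
  omega

def pathPackings (n : ℕ) (m : ι → ℕ) : Set (ι → Finset ℕ) :=
  {S | (∀ i, ∀ a ∈ S i, a + ℓ i < n) ∧ (∀ i, #(S i) = m i) ∧ IsPacking ℓ S}

variable {ℓ} {n : ℕ} {m : ι → ℕ}

lemma image_contract_mem_disjointFamilies (hS : S ∈ pathPackings ℓ n m) :
    (fun i => (S i).image (contract ℓ S)) ∈ disjointFamilies (range (n - ∑ i, ℓ i * m i)) m := by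
  obtain ⟨hbound, hcard, hS⟩ := hS
  have hinj := hS.contract_strictMonoOn.injOn
  have hmem {i a} (ha : a ∈ S i) : a ∈ ⋃ i, (S i : Set ℕ) := Set.mem_iUnion.2 ⟨i, ha⟩
  refine ⟨fun i j hij => disjoint_left.2 ?_, fun i => ?_, fun i => ?_⟩
  · simp only [mem_image]
    rintro _ ⟨a, ha, rfl⟩ ⟨b, hb, hab⟩
    obtain rfl := hinj (hmem hb) (hmem ha) hab
    exact disjoint_left.1 (hS.disjoint hij) ha hb
  · intro c hc
    obtain ⟨a, ha, rfl⟩ := mem_image.1 hc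
    have hlt := hS.weightBelow_add_lt ℓ ha (y := n) (by have := hbound i a ha; omega)
      fun j b hb _ => hbound j b hb
    have hle := hS.weightBelow_le_of_mem ℓ ha
    rw [weightBelow_eq_sum ℓ (fun j b hb => by have := hbound j b hb; omega) hcard] at hlt
    rw [mem_range, contract]
    omega
  · rw [card_image_of_injOn fun a ha b hb => hinj (hmem ha) (hmem hb), hcard]

lemma image_expand_mem_pathPackings {N : ℕ} (hT : T ∈ disjointFamilies (range N) m)
    (hN : N + ∑ i, ℓ i * m i = n) :
    (fun i => (T i).image (expand ℓ T)) ∈ pathPackings ℓ n m := by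
  obtain ⟨hdisj, hsub, hcard⟩ := hT
  refine ⟨fun i a ha => ?_, fun i => ?_, isPacking_image_expand ℓ hdisj⟩
  · obtain ⟨s, hs, rfl⟩ := mem_image.1 ha
    have hN' : expand ℓ T N = n := by
      rw [expand, weightBelow_eq_sum ℓ (fun j t ht => mem_range.1 (hsub j ht)) hcard, hN]
    exact hN' ▸ expand_add_lt ℓ hs (mem_range.1 (hsub i hs))
  · rw [card_image_of_injective _ (expand_strictMono ℓ).injective, hcard]

def pathPackingsEquiv (h : ∑ i, ℓ i * m i ≤ n) :
    pathPackings ℓ n m ≃ disjointFamilies (range (n - ∑ i, ℓ i * m i)) m where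
  toFun S := ⟨_, image_contract_mem_disjointFamilies S.2⟩
  invFun T := ⟨_, image_expand_mem_pathPackings T.2 (Nat.sub_add_cancel h)⟩
  left_inv S := Subtype.ext <| funext fun i => by
    dsimp only
    rw [image_image]
    exact (image_congr fun a ha => S.2.2.2.expand_image_contract ℓ ha).trans image_id'
  right_inv T := Subtype.ext <| funext fun i => by
    dsimp only
    rw [image_image]
    exact (image_congr fun s _ => contract_image_expand ℓ s).trans image_id'

end PathPackings

theorem count_disjoint_subpaths_of_path_general (n p : ℕ) (m : Fin p → ℕ)
    (hfit : ∑ i : Fin p, ((i : ℕ) + 2) * m i ≤ n) :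
    Nat.card {starts : Fin p → Finset ℕ //
        (∀ i, ∀ a ∈ starts i, a + ((i : ℕ) + 1) ≤ n - 1) ∧
        (∀ i, (starts i).card = m i) ∧
        (∀ i j, ∀ a ∈ starts i, ∀ b ∈ starts j, (i ≠ j ∨ a ≠ b) →
          Disjoint (Finset.Icc a (a + (i : ℕ) + 1)) (Finset.Icc b (b + (j : ℕ) + 1)))}
      * ∏ i : Fin p, Nat.factorial (m i) =
      Nat.descFactorial (n - ∑ i : Fin p, ((i : ℕ) + 1) * m i) (∑ i : Fin p, m i) := by
  set ℓ : Fin p → ℕ := fun i => (i : ℕ) + 1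
  have hℓ : ∑ i, ℓ i * m i ≤ n :=
    (sum_le_sum fun i _ => Nat.mul_le_mul_right _ (Nat.le_succ _)).trans hfit
  have key := card_disjointFamilies_mul_prod_factorial (range (n - ∑ i, ℓ i * m i)) m
  rw [card_range, ← Nat.card_congr (pathPackingsEquiv hℓ)] at key
  convert key using 2
  refine Nat.card_congr (Equiv.subtypeEquivRight fun S => ?_)
  simp only [pathPackings, Set.mem_ofPred_eq, isPacking_iff_disjoint_Icc, ℓ, add_assoc]
  exact and_congr (forall₃_congr fun i a _ => by omega) Iff.rfl

/-- Counting families of pairwise disjoint subpaths in a path on `n` vertices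
(vertices labeled `0, …, n-1`, edges `{a, a+1}`).  For each `i : Fin p`, we choose
`m i` subpaths of length `i+1`, each recorded by its starting (leftmost) vertex;
a subpath of length `ℓ` starting at `a` occupies the vertices `a, …, a+ℓ`. -/
theorem count_disjoint_subpaths_of_path (n p : ℕ) (hn : 1 ≤ n) (m : Fin p → ℕ)
    (hfit : ∑ i : Fin p, ((i : ℕ) + 2) * m i ≤ n) :
    Nat.card {starts : Fin p → Finset ℕ //
        (∀ i, ∀ a ∈ starts i, a + ((i : ℕ) + 1) ≤ n - 1) ∧
        (∀ i, (starts i).card = m i) ∧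
        (∀ i j, ∀ a ∈ starts i, ∀ b ∈ starts j, (i ≠ j ∨ a ≠ b) →
          Disjoint (Finset.Icc a (a + (i : ℕ) + 1)) (Finset.Icc b (b + (j : ℕ) + 1)))}
      * ∏ i : Fin p, Nat.factorial (m i) =
      Nat.descFactorial (n - ∑ i : Fin p, ((i : ℕ) + 1) * m i) (∑ i : Fin p, m i) :=
  count_disjoint_subpaths_of_path_general n p m hfit
end

section
/- Let y be a Hamiltonian cycle in K_n containing the edge {s,t}, and π a partition of k with m parts, m_i parts of size i. Then the number of path subsets Γ ⊆ y of partition type π such that neither s nor t appears in any edge of Γ equals (n-2-k)_{(m)} / ∏_j m_j!. -/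
open scoped Classical

/-- `Γ` has partition type given by the list of path lengths `ks`. -/
def hasType (n M : ℕ) (ks : Fin M → ℕ) (Γ : Finset (Sym2 (Fin n))) : Prop :=
  ∃ p : ∀ j : Fin M, Fin (ks j + 1) → Fin n,
    (∀ j, Function.Injective (p j)) ∧
    (∀ j j', j ≠ j' → ∀ a b, p j a ≠ p j' b) ∧
    Γ = Finset.univ.biUnion fun j => pathEdges n (ks j) (p j)

/-!
Write the cycle as `t = w 0, w 1, …, w (n - 1) = s` with `w l = (σ ^ l) t`. The edges avoiding
`s` and `t` form the path `w 1, …, w (n - 2)`, so a path subset of type `ks` there is a family of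
`M` vertex-disjoint runs of consecutive vertices, the `j`-th with `ks j` edges, taken up to
permuting runs of equal length. Ordered families (placements) on a path with `N` vertices are
counted by shrinking each run to a point, which gives a bijection with the injections
`Fin M ↪ Fin (N - k)`, hence `(N - k)_(M)` of them. Since each run has at least one edge, the
edge set determines the runs, so the permutations preserving `ks`, of which there are
`∏ i, m_i!`, act simply transitively on the placements of a fixed path subset.
-/

theorem card_perms_preserving_eq_prod_factorial {M k : ℕ} (ks : Fin M → ℕ)
    (hks : ∀ j, ks j ≤ k) :
    Nat.card {τ : Equiv.Perm (Fin M) // ∀ j, ks (τ j) = ks j} =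
      ∏ i ∈ Finset.range (k + 1), (Finset.univ.filter fun j => ks j = i).card.factorial := by
  set f : Fin M → Fin (k + 1) := fun j => ⟨ks j, Nat.lt_succ_of_le (hks j)⟩
  have hf : ∀ τ : Equiv.Perm (Fin M), (∀ j, ks (τ j) = ks j) ↔ f ∘ τ = f := fun τ => by
    simp [funext_iff, f, Fin.ext_iff]
  rw [Nat.card_congr (Equiv.subtypeEquivRight hf), Nat.card_eq_fintype_card,
    DomMulAct.stabilizer_card, ← Fin.prod_univ_eq_prod_range]
  refine Finset.prod_congr rfl fun i _ => ?_
  rw [Fintype.card_subtype]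
  simp [f, Fin.ext_iff]

section Order

variable {ι α β : Type*} [LinearOrder α] [LinearOrder β] {f : ι → α} {g : ι → β}

theorem lt_iff_lt_of_lt_imp_lt (hg : Function.Injective g) (h : ∀ u j, g u < g j → f u < f j)
    (u j : ι) : f u < f j ↔ g u < g j := by
  refine ⟨fun hf => ?_, h u j⟩
  rcases lt_trichotomy (g u) (g j) with hlt | heq | hgt
  · exact hlt
  · exact absurd hf (hg heq ▸ lt_irrefl _)
  · exact absurd (h j u hgt) hf.not_gt

theorem injective_of_lt_imp_lt (hg : Function.Injective g) (h : ∀ u j, g u < g j → f u < f j) :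
    Function.Injective f := fun u j huj => hg <| by
  have := lt_iff_lt_of_lt_imp_lt hg h u j
  have := lt_iff_lt_of_lt_imp_lt hg h j u
  rcases lt_trichotomy (g u) (g j) with hlt | heq | hgt <;> simp_all

end Order

section Placement

variable {M : ℕ} (ks : Fin M → ℕ) {N : ℕ} {a b : Fin M → ℕ}

def Apart (a : Fin M → ℕ) : Prop :=
  Pairwise fun j j' => a j + ks j < a j' ∨ a j' + ks j' < a j

/-- Runs `a j, a j + 1, …, a j + ks j` of consecutive vertices of the path `0, 1, …, N - 1`,
pairwise vertex-disjoint: the ordered version of a path subset of type `ks`. -/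
def IsPlacement (N : ℕ) (a : Fin M → ℕ) : Prop :=
  (∀ j, a j + ks j < N) ∧ Apart ks a

variable {ks}

theorem Apart.injective (ha : Apart ks a) : Function.Injective a := fun j j' h => by
  by_contra hne
  rcases ha hne with h' | h' <;> omega

theorem Apart.add_lt_of_lt (ha : Apart ks a) {u j : Fin M} (h : a u < a j) : a u + ks u < a j := by
  rcases ha (fun e : u = j => by subst e; omega) with h' | h' <;> omega

theorem Apart.sum_add_one_le (ha : Apart ks a) (P : Finset (Fin M)) {lo hi : ℕ}
    (h : ∀ u ∈ P, lo ≤ a u ∧ a u + ks u < hi) : ∑ u ∈ P, (ks u + 1) ≤ hi - lo := by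
  have hdisj : (P : Set (Fin M)).PairwiseDisjoint fun u => Finset.Icc (a u) (a u + ks u) :=
    fun u _ j _ huj => Finset.disjoint_left.2 fun x hxu hxj => by
      rw [Finset.mem_Icc] at hxu hxj
      rcases ha huj with h' | h' <;> omega
  have hsub : P.biUnion (fun u => Finset.Icc (a u) (a u + ks u)) ⊆ Finset.Ico lo hi :=
    Finset.biUnion_subset.2 fun u hu x hx => by
      rw [Finset.mem_Icc] at hx
      have := h u hu
      rw [Finset.mem_Ico]
      omega
  calc ∑ u ∈ P, (ks u + 1) = ∑ u ∈ P, (Finset.Icc (a u) (a u + ks u)).card :=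
        Finset.sum_congr rfl fun u _ => by rw [Nat.card_Icc]; omega
    _ = (P.biUnion fun u => Finset.Icc (a u) (a u + ks u)).card := (Finset.card_biUnion hdisj).symm
    _ ≤ hi - lo := (Finset.card_le_card hsub).trans_eq (Nat.card_Ico lo hi)

variable (ks)

def lengthBelow (a : Fin M → ℕ) (j : Fin M) : ℕ :=
  ∑ u ∈ Finset.univ.filter fun u => a u < a j, ks u

/-- Shrinking every run to its first vertex turns a placement into an injection
`Fin M ↪ Fin (N - ∑ ks)`; `spread` inverts this. -/
def compress (a : Fin M → ℕ) (j : Fin M) : ℕ := a j - lengthBelow ks a j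

def spread (b : Fin M → ℕ) (j : Fin M) : ℕ := b j + lengthBelow ks b j

variable {ks}

theorem lengthBelow_congr (h : ∀ u j, a u < a j ↔ b u < b j) :
    lengthBelow ks a = lengthBelow ks b := by
  funext j
  simp only [lengthBelow, h]

theorem lengthBelow_add_le {u j : Fin M} (h : a u < a j) :
    lengthBelow ks a u + ks u ≤ lengthBelow ks a j := by
  have hu : u ∉ Finset.univ.filter fun x => a x < a u := by simp
  have hsub : insert u (Finset.univ.filter fun x => a x < a u) ⊆
      Finset.univ.filter fun x => a x < a j := by
    intro x
    simp only [Finset.mem_insert, Finset.mem_filter, Finset.mem_univ, true_and]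
    rintro (rfl | hx) <;> omega
  simpa [lengthBelow, Finset.sum_insert hu, add_comm] using Finset.sum_le_sum_of_subset hsub

theorem lengthBelow_add_le_sum (j : Fin M) : lengthBelow ks a j + ks j ≤ ∑ u, ks u := by
  have hj : j ∉ Finset.univ.filter fun x => a x < a j := by simp
  have := Finset.sum_le_sum_of_subset (f := ks) (Finset.subset_univ
    (insert j (Finset.univ.filter fun x => a x < a j)))
  rw [Finset.sum_insert hj] at this
  simp only [lengthBelow]
  omega

theorem Apart.lengthBelow_le (ha : Apart ks a) (j : Fin M) : lengthBelow ks a j ≤ a j := by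
  have := ha.sum_add_one_le (Finset.univ.filter fun u => a u < a j) (lo := 0) (hi := a j)
    fun u hu => ⟨Nat.zero_le _, ha.add_lt_of_lt (Finset.mem_filter.1 hu).2⟩
  rw [Finset.sum_add_distrib] at this
  simp only [lengthBelow]
  omega

theorem Apart.lengthBelow_add_lt {u j : Fin M} (ha : Apart ks a) (h : a u < a j) :
    lengthBelow ks a j + a u < lengthBelow ks a u + a j := by
  set D := Finset.univ.filter fun x => a u ≤ a x ∧ a x < a j
  have hsplit : lengthBelow ks a j = lengthBelow ks a u + ∑ x ∈ D, ks x := by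
    rw [lengthBelow, lengthBelow, ← Finset.sum_union]
    · congr 1
      ext x
      simp only [D, Finset.mem_union, Finset.mem_filter, Finset.mem_univ, true_and]
      omega
    · exact Finset.disjoint_filter.2 fun x _ hx => by omega
  have hD := ha.sum_add_one_le D fun x hx => by
    rw [Finset.mem_filter] at hx
    exact ⟨hx.2.1, ha.add_lt_of_lt hx.2.2⟩
  have huD : u ∈ D := by simp [D, h]
  rw [Finset.sum_add_distrib, Finset.sum_const, smul_eq_mul, mul_one] at hD
  have := Finset.card_pos.2 ⟨u, huD⟩
  omega

theorem IsPlacement.add_sum_lt (ha : IsPlacement ks N a) (j : Fin M) :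
    a j + ∑ u, ks u < N + lengthBelow ks a j := by
  set A := Finset.univ.filter fun u => a j < a u
  have hnot : Finset.univ.filter (fun u => ¬a u < a j) = insert j A := by
    ext u
    have := ha.2.injective.eq_iff (a := u) (b := j)
    simp only [A, Finset.mem_filter, Finset.mem_insert, Finset.mem_univ, true_and]
    omega
  have hsplit : ∑ u, ks u = lengthBelow ks a j + ks j + ∑ u ∈ A, ks u := by
    rw [lengthBelow, ← Finset.sum_filter_add_sum_filter_not Finset.univ (fun u => a u < a j),
      hnot, Finset.sum_insert (by simp [A]), add_assoc]
  have hA := ha.2.sum_add_one_le A (lo := a j + ks j + 1) (hi := N) fun u hu => by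
    rw [Finset.mem_filter] at hu
    exact ⟨by have := ha.2.add_lt_of_lt hu.2; omega, ha.1 u⟩
  rw [Finset.sum_add_distrib] at hA
  have := ha.1 j
  omega

theorem Apart.compress_lt_compress (ha : Apart ks a) {u j : Fin M} (h : a u < a j) :
    compress ks a u < compress ks a j := by
  have := ha.lengthBelow_add_lt h
  have := ha.lengthBelow_le u
  simp only [compress]
  omega

theorem spread_add_lt_spread {u j : Fin M} (h : b u < b j) :
    spread ks b u + ks u < spread ks b j := by
  have := lengthBelow_add_le (ks := ks) h
  simp only [spread]
  omega

theorem Apart.lengthBelow_compress (ha : Apart ks a) :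
    lengthBelow ks (compress ks a) = lengthBelow ks a :=
  lengthBelow_congr (lt_iff_lt_of_lt_imp_lt ha.injective fun _ _ => ha.compress_lt_compress)

theorem lengthBelow_spread (hb : Function.Injective b) :
    lengthBelow ks (spread ks b) = lengthBelow ks b :=
  lengthBelow_congr (lt_iff_lt_of_lt_imp_lt hb fun _ _ h =>
    (Nat.le_add_right _ _).trans_lt (spread_add_lt_spread h))

theorem Apart.spread_compress (ha : Apart ks a) : spread ks (compress ks a) = a := by
  funext j
  have := ha.lengthBelow_le j
  simp only [spread, ha.lengthBelow_compress, compress]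
  omega

theorem compress_spread (hb : Function.Injective b) : compress ks (spread ks b) = b := by
  funext j
  simp [compress, lengthBelow_spread hb, spread]

theorem IsPlacement.compress_lt (ha : IsPlacement ks N a) (j : Fin M) :
    compress ks a j < N - ∑ u, ks u := by
  have := ha.add_sum_lt j
  have := ha.2.lengthBelow_le j
  simp only [compress]
  omega

theorem isPlacement_spread (hb : Function.Injective b) (hlt : ∀ j, b j < N - ∑ u, ks u) :
    IsPlacement ks N (spread ks b) := by
  refine ⟨fun j => ?_, fun u j huj => ?_⟩
  · have := lengthBelow_add_le_sum (ks := ks) (a := b) j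
    have := hlt j
    simp only [spread]
    omega
  · rcases (hb.ne huj).lt_or_gt with h | h
    · exact .inl (spread_add_lt_spread h)
    · exact .inr (spread_add_lt_spread h)

variable (ks N)

def placementEquiv : {a // IsPlacement ks N a} ≃ (Fin M ↪ Fin (N - ∑ u, ks u)) where
  toFun a := ⟨fun j => ⟨compress ks a.1 j, a.2.compress_lt j⟩, fun _ _ h =>
    injective_of_lt_imp_lt a.2.2.injective (fun _ _ => a.2.2.compress_lt_compress)
      (congrArg Fin.val h)⟩
  invFun b := ⟨spread ks (fun j => b j),
    isPlacement_spread (Fin.val_injective.comp b.injective) fun j => (b j).2⟩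
  left_inv a := Subtype.ext a.2.2.spread_compress
  right_inv b := by
    ext j
    exact congrFun (compress_spread (Fin.val_injective.comp b.injective)) j

theorem card_placements :
    Nat.card {a // IsPlacement ks N a} = (N - ∑ u, ks u).descFactorial M := by
  rw [Nat.card_congr (placementEquiv ks N), Nat.card_eq_fintype_card, Fintype.card_embedding_eq,
    Fintype.card_fin, Fintype.card_fin]

/-- `x` stands for the edge `{x, x + 1}`. -/
def Covers (a : Fin M → ℕ) (x : ℕ) : Prop := ∃ j, a j ≤ x ∧ x < a j + ks j

variable {ks N}

theorem Apart.not_covers_end (ha : Apart ks a) (j : Fin M) : ¬Covers ks a (a j + ks j) := by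
  rintro ⟨u, h1, h2⟩
  rcases eq_or_ne u j with rfl | hne
  · omega
  · rcases ha hne with h | h <;> omega

theorem Apart.not_covers_pred (ha : Apart ks a) {j : Fin M} (hj : 0 < a j) :
    ¬Covers ks a (a j - 1) := by
  rintro ⟨u, h1, h2⟩
  rcases eq_or_ne u j with rfl | hne
  · omega
  · rcases ha hne with h | h <;> omega

/-- A run starts at a covered edge whose predecessor is uncovered and ends before the next
uncovered edge, so the covered edges determine the runs up to relabelling. -/
theorem Apart.exists_eq_of_covers_iff (ha : Apart ks a) (hb : Apart ks b) (hks : ∀ j, 1 ≤ ks j)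
    (h : ∀ x, Covers ks a x ↔ Covers ks b x) (j : Fin M) : ∃ j', b j' = a j ∧ ks j' = ks j := by
  obtain ⟨j', h1, h2⟩ := (h (a j)).1 ⟨j, le_rfl, by have := hks j; omega⟩
  have hstart : b j' = a j := by
    by_contra hne
    exact ha.not_covers_pred (by omega) ((h (a j - 1)).2 ⟨j', by omega, by omega⟩)
  refine ⟨j', hstart, ?_⟩
  rcases lt_trichotomy (ks j') (ks j) with hlt | heq | hgt
  · exact absurd ((h (b j' + ks j')).1 ⟨j, by omega, by omega⟩) (hb.not_covers_end j')
  · exact heq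
  · exact absurd ((h (a j + ks j)).2 ⟨j', by omega, by omega⟩) (ha.not_covers_end j)

theorem IsPlacement.comp_perm (ha : IsPlacement ks N a) {τ : Equiv.Perm (Fin M)}
    (hτ : ∀ j, ks (τ j) = ks j) : IsPlacement ks N (a ∘ τ) := by
  refine ⟨fun j => hτ j ▸ ha.1 (τ j), fun j j' hjj => ?_⟩
  simpa only [Function.comp_apply, hτ] using ha.2 (τ.injective.ne hjj)

end Placement

theorem linear_of_injOn_of_unit_steps {ℓ : ℕ} {q : ℕ → ℕ} (hinj : Set.InjOn q (Set.Iic ℓ))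
    (hstep : ∀ i < ℓ, q (i + 1) = q i + 1 ∨ q i = q (i + 1) + 1) :
    (∀ i ≤ ℓ, q i = q 0 + i) ∨ ∀ i ≤ ℓ, q i + i = q 0 := by
  have hlin : ∀ i ≤ ℓ, (q 1 = q 0 + 1 → q i = q 0 + i) ∧ (q 1 ≠ q 0 + 1 → q i + i = q 0) := by
    intro i
    induction i using Nat.strong_induction_on with
    | _ i ih =>
      intro hi
      match i with
      | 0 => omega
      | 1 =>
        have := hstep 0 (by omega)
        rw [zero_add] at this
        omega
      | m + 2 =>
        have h1 := ih (m + 1) (by omega) (by omega)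
        have h0 := ih m (by omega) (by omega)
        have hne : q (m + 2) ≠ q m := fun h => by
          have := hinj (Set.mem_Iic.2 hi) (Set.mem_Iic.2 (by omega)) h
          omega
        have : q (m + 2) = q (m + 1) + 1 ∨ q (m + 1) = q (m + 2) + 1 := hstep (m + 1) (by omega)
        constructor <;> intro hup
        · have := h1.1 hup
          have := h0.1 hup
          omega
        · have := h1.2 hup
          have := h0.2 hup
          omega
  by_cases h : q 1 = q 0 + 1
  · exact .inl fun i hi => (hlin i hi).1 h
  · exact .inr fun i hi => (hlin i hi).2 h

theorem mem_pathEdges {n ℓ : ℕ} {p : Fin (ℓ + 1) → Fin n} {e : Sym2 (Fin n)} :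
    e ∈ pathEdges n ℓ p ↔ ∃ i : Fin ℓ, e = s(p i.castSucc, p i.succ) := by
  simp [pathEdges, eq_comm]

theorem pathEdges_comp_rev {n ℓ : ℕ} (p : Fin (ℓ + 1) → Fin n) :
    pathEdges n ℓ (p ∘ Fin.rev) = pathEdges n ℓ p := by
  ext e
  simp only [mem_pathEdges, Function.comp_apply, Fin.rev_castSucc, Fin.rev_succ]
  constructor
  · rintro ⟨i, rfl⟩
    exact ⟨i.rev, Sym2.eq_swap⟩
  · rintro ⟨i, rfl⟩
    exact ⟨i.rev, by simp [Sym2.eq_swap]⟩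

section Line

variable {n : ℕ} (v : ℕ → Fin n) (N : ℕ)

def IsLineEdge (e : Sym2 (Fin n)) : Prop :=
  ∃ x, x + 1 < N ∧ e = s(v x, v (x + 1))

variable {M : ℕ} (ks : Fin M → ℕ)

def runEdges (a : Fin M → ℕ) : Finset (Sym2 (Fin n)) :=
  Finset.univ.biUnion fun j => pathEdges n (ks j) fun i => v (a j + i)

variable {v N}

section PathOnLine

variable (hv : Set.InjOn v (Set.Iio N)) {ℓ : ℕ} {p : Fin (ℓ + 1) → Fin n}
  (hline : ∀ e ∈ pathEdges n ℓ p, IsLineEdge v N e)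
include hline

theorem exists_step_of_isLineEdge (i : Fin ℓ) : ∃ x, x + 1 < N ∧
    (p i.castSucc = v x ∧ p i.succ = v (x + 1) ∨ p i.castSucc = v (x + 1) ∧ p i.succ = v x) := by
  obtain ⟨x, hx, he⟩ := hline _ (mem_pathEdges.2 ⟨i, rfl⟩)
  exact ⟨x, hx, Sym2.eq_iff.1 he⟩

theorem mem_image_of_isLineEdge (hℓ : 1 ≤ ℓ) (i : Fin (ℓ + 1)) : p i ∈ v '' Set.Iio N := by
  induction i using Fin.cases with
  | zero =>
    obtain ⟨x, hx, h | h⟩ := exists_step_of_isLineEdge hline ⟨0, hℓ⟩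
    · exact ⟨x, by simp; omega, h.1.symm⟩
    · exact ⟨x + 1, by simp; omega, h.1.symm⟩
  | succ i =>
    obtain ⟨x, hx, h | h⟩ := exists_step_of_isLineEdge hline i
    · exact ⟨x + 1, by simp; omega, h.2.symm⟩
    · exact ⟨x, by simp; omega, h.2.symm⟩

include hv in
theorem exists_positions_of_isLineEdge (hℓ : 1 ≤ ℓ) (hp : Function.Injective p) :
    ∃ q : ℕ → ℕ, (∀ i : Fin (ℓ + 1), q i < N ∧ v (q i) = p i) ∧ Set.InjOn q (Set.Iic ℓ) ∧
      ∀ i < ℓ, q (i + 1) = q i + 1 ∨ q i = q (i + 1) + 1 := by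
  set q : ℕ → ℕ := fun i => Function.invFunOn v (Set.Iio N) (p (Fin.ofNat (ℓ + 1) i))
  have hq (i : Fin (ℓ + 1)) : q i < N ∧ v (q i) = p i := by
    simpa [q, Fin.ofNat_val_eq_self] using
      Function.invFunOn_pos (mem_image_of_isLineEdge hline hℓ i)
  have hq_eq {i : Fin (ℓ + 1)} {x : ℕ} (hx : x < N) (h : p i = v x) : q i = x := by
    simpa [q, Fin.ofNat_val_eq_self, h] using hv.leftInvOn_invFunOn hx
  refine ⟨q, hq, fun i hi i' hi' h => ?_, fun i hi => ?_⟩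
  · have hi : i < ℓ + 1 := Nat.lt_succ_of_le hi
    have hi' : i' < ℓ + 1 := Nat.lt_succ_of_le hi'
    exact Fin.mk.inj (hp (((hq ⟨i, hi⟩).2.symm.trans (congrArg v h)).trans (hq ⟨i', hi'⟩).2))
  · obtain ⟨x, hx, h | h⟩ := exists_step_of_isLineEdge hline ⟨i, hi⟩
    · have e0 : q i = x := hq_eq (i := Fin.castSucc ⟨i, hi⟩) (by omega) h.1
      have e1 : q (i + 1) = x + 1 := hq_eq (i := Fin.succ ⟨i, hi⟩) hx h.2
      omega
    · have e0 : q i = x + 1 := hq_eq (i := Fin.castSucc ⟨i, hi⟩) hx h.1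
      have e1 : q (i + 1) = x := hq_eq (i := Fin.succ ⟨i, hi⟩) (by omega) h.2
      omega

include hv in
theorem exists_run_of_isLineEdge (hℓ : 1 ≤ ℓ) (hp : Function.Injective p) :
    ∃ b, b + ℓ < N ∧ pathEdges n ℓ p = pathEdges n ℓ (fun i => v (b + i)) ∧
      ∀ i : Fin (ℓ + 1), ∃ i', p i' = v (b + i) := by
  obtain ⟨q, hq, hinj, hstep⟩ := exists_positions_of_isLineEdge hv hline hℓ hp
  obtain ⟨b, hb, hrun⟩ : ∃ b, b + ℓ < N ∧
      (p = (fun i : Fin (ℓ + 1) => v (b + i)) ∨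
        p ∘ Fin.rev = fun i : Fin (ℓ + 1) => v (b + i)) := by
    rcases linear_of_injOn_of_unit_steps hinj hstep with hup | hdown
    · refine ⟨q 0, ?_, .inl <| funext fun i => ?_⟩
      · have : q ℓ < N := (hq (Fin.last ℓ)).1
        have := hup ℓ le_rfl
        omega
      · rw [← (hq i).2, hup i (by omega)]
    · refine ⟨q ℓ, ?_, .inr <| funext fun i => ?_⟩
      · have : q 0 < N := (hq 0).1
        have := hdown ℓ le_rfl
        omega
      · have := hdown ℓ le_rfl
        have := hdown (ℓ + 1 - (i + 1)) (by omega)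
        rw [Function.comp_apply, ← (hq i.rev).2, Fin.val_rev]
        congr 1
        omega
  refine ⟨b, hb, ?_, fun i => ?_⟩
  · rcases hrun with rfl | hrun
    · rfl
    · rw [← pathEdges_comp_rev p, hrun]
  · rcases hrun with rfl | hrun
    · exact ⟨i, rfl⟩
    · exact ⟨i.rev, congrFun hrun i⟩

end PathOnLine

variable {ks} {a b : Fin M → ℕ}

theorem mem_runEdges {e : Sym2 (Fin n)} :
    e ∈ runEdges v ks a ↔ ∃ x, Covers ks a x ∧ e = s(v x, v (x + 1)) := by
  simp only [runEdges, Finset.mem_biUnion, Finset.mem_univ, true_and, mem_pathEdges,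
    Fin.val_castSucc, Fin.val_succ, Covers]
  constructor
  · rintro ⟨j, i, rfl⟩
    exact ⟨a j + i, ⟨j, by omega, by omega⟩, rfl⟩
  · rintro ⟨x, ⟨j, h1, h2⟩, rfl⟩
    exact ⟨j, ⟨x - a j, by omega⟩, by rw [← add_assoc, Nat.add_sub_cancel' h1]⟩

theorem IsPlacement.isLineEdge_of_mem_runEdges (ha : IsPlacement ks N a) {e : Sym2 (Fin n)}
    (he : e ∈ runEdges v ks a) : IsLineEdge v N e := by
  obtain ⟨x, ⟨j, h1, h2⟩, rfl⟩ := mem_runEdges.1 he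
  exact ⟨x, by have := ha.1 j; omega, rfl⟩

theorem IsPlacement.hasType_runEdges (hv : Set.InjOn v (Set.Iio N)) (ha : IsPlacement ks N a) :
    hasType n M ks (runEdges v ks a) := by
  refine ⟨fun j i => v (a j + i), fun j i i' h => ?_, fun j j' hjj i i' h => ?_, rfl⟩
  · have := ha.1 j
    have := hv (Set.mem_Iio.2 (by omega)) (Set.mem_Iio.2 (by omega)) h
    exact Fin.ext (by omega)
  · have := ha.1 j
    have := ha.1 j'
    have := hv (Set.mem_Iio.2 (by omega)) (Set.mem_Iio.2 (by omega)) h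
    rcases ha.2 hjj with h' | h' <;> omega

theorem isLineEdge_edge_inj (hv : Set.InjOn v (Set.Iio N)) {x x' : ℕ} (hx : x + 1 < N)
    (hx' : x' + 1 < N) (h : s(v x, v (x + 1)) = s(v x', v (x' + 1))) : x = x' := by
  have hvx {y y' : ℕ} (hy : y < N) (hy' : y' < N) (h : v y = v y') : y = y' := hv hy hy' h
  rcases Sym2.eq_iff.1 h with ⟨h1, -⟩ | ⟨h1, h2⟩
  · exact hvx (by omega) (by omega) h1
  · have := hvx (by omega) (by omega) h1
    have := hvx (by omega) (by omega) h2
    omega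

theorem covers_iff_of_runEdges_eq (hv : Set.InjOn v (Set.Iio N)) (ha : IsPlacement ks N a)
    (hb : IsPlacement ks N b) (h : runEdges v ks a = runEdges v ks b) (x : ℕ) :
    Covers ks a x ↔ Covers ks b x := by
  have hcovers {a b : Fin M → ℕ} (ha : IsPlacement ks N a) (hb : IsPlacement ks N b)
      (h : runEdges v ks a = runEdges v ks b) (hx : Covers ks a x) : Covers ks b x := by
    obtain ⟨j, h1, h2⟩ := hx
    have hx : x + 1 < N := by have := ha.1 j; omega
    obtain ⟨x', hx', he⟩ := mem_runEdges.1 (h ▸ mem_runEdges.2 ⟨x, ⟨j, h1, h2⟩, rfl⟩)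
    obtain ⟨j', h1', h2'⟩ := hx'
    obtain rfl := isLineEdge_edge_inj hv hx (by have := hb.1 j'; omega) he
    exact ⟨j', h1', h2'⟩
  exact ⟨hcovers ha hb h, hcovers hb ha h.symm⟩

theorem runEdges_comp_perm {τ : Equiv.Perm (Fin M)} (hτ : ∀ j, ks (τ j) = ks j) :
    runEdges v ks (a ∘ τ) = runEdges v ks a := by
  ext e
  simp only [mem_runEdges, Covers, Function.comp_apply]
  constructor
  · rintro ⟨x, ⟨j, hj⟩, rfl⟩
    exact ⟨x, ⟨τ j, by rwa [hτ j]⟩, rfl⟩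
  · rintro ⟨x, ⟨j, hj⟩, rfl⟩
    exact ⟨x, ⟨τ.symm j, by rwa [τ.apply_symm_apply, ← hτ, τ.apply_symm_apply]⟩, rfl⟩

theorem exists_perm_of_runEdges_eq (hv : Set.InjOn v (Set.Iio N)) (ha : IsPlacement ks N a)
    (hb : IsPlacement ks N b) (hks : ∀ j, 1 ≤ ks j) (h : runEdges v ks a = runEdges v ks b) :
    ∃ τ : Equiv.Perm (Fin M), (∀ j, ks (τ j) = ks j) ∧ a ∘ τ = b := by
  choose g hga hgks using
    hb.2.exists_eq_of_covers_iff ha.2 hks fun x => (covers_iff_of_runEdges_eq hv ha hb h x).symm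
  have hg : Function.Injective g := fun j j' hjj => hb.2.injective <| by rw [← hga, ← hga, hjj]
  exact ⟨Equiv.ofBijective g hg.bijective_of_finite, hgks, funext hga⟩

theorem exists_isPlacement_runEdges_eq (hv : Set.InjOn v (Set.Iio N)) (hks : ∀ j, 1 ≤ ks j)
    {Γ : Finset (Sym2 (Fin n))} (hΓ : hasType n M ks Γ) (hline : ∀ e ∈ Γ, IsLineEdge v N e) :
    ∃ a, IsPlacement ks N a ∧ runEdges v ks a = Γ := by
  obtain ⟨p, hp, hdisj, rfl⟩ := hΓ
  choose a ha hedges hverts using fun j => exists_run_of_isLineEdge hv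
    (fun e he => hline e (Finset.mem_biUnion.2 ⟨j, Finset.mem_univ j, he⟩)) (hks j) (hp j)
  refine ⟨a, ⟨ha, fun j j' hjj => ?_⟩, Finset.biUnion_congr rfl fun j _ => (hedges j).symm⟩
  by_contra hover
  -- overlapping runs would share the vertex `v (max (a j) (a j'))`
  obtain ⟨i, hi⟩ := hverts j ⟨max (a j) (a j') - a j, by omega⟩
  obtain ⟨i', hi'⟩ := hverts j' ⟨max (a j) (a j') - a j', by omega⟩
  refine hdisj j j' hjj i i' (hi.trans (congrArg v ?_) |>.trans hi'.symm)
  simp only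
  omega

theorem card_subsets_line_mul_card_perms (hv : Set.InjOn v (Set.Iio N)) (hks : ∀ j, 1 ≤ ks j) :
    Nat.card {Γ : Finset (Sym2 (Fin n)) // hasType n M ks Γ ∧ ∀ e ∈ Γ, IsLineEdge v N e}
      * Nat.card {τ : Equiv.Perm (Fin M) // ∀ j, ks (τ j) = ks j}
      = (N - ∑ j, ks j).descFactorial M := by
  choose rep hrep hrepΓ using fun Γ : {Γ : Finset (Sym2 (Fin n)) //
    hasType n M ks Γ ∧ ∀ e ∈ Γ, IsLineEdge v N e} =>
      exists_isPlacement_runEdges_eq hv hks Γ.2.1 Γ.2.2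
  rw [← Nat.card_prod, ← card_placements ks N]
  refine Nat.card_eq_of_bijective (fun z => ⟨rep z.1 ∘ z.2.1, (hrep z.1).comp_perm z.2.2⟩)
    ⟨fun ⟨Γ, τ⟩ ⟨Γ', τ'⟩ h => ?_, fun ⟨b, hb⟩ => ?_⟩
  · have h : rep Γ ∘ τ.1 = rep Γ' ∘ τ'.1 := congrArg Subtype.val h
    obtain rfl : Γ = Γ' := Subtype.ext <| by
      rw [← hrepΓ Γ, ← hrepΓ Γ', ← runEdges_comp_perm τ.2, h, runEdges_comp_perm τ'.2]
    obtain rfl : τ = τ' := Subtype.ext <| Equiv.ext fun j => (hrep Γ).2.injective (congrFun h j)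
    rfl
  · let Γ : {Γ : Finset (Sym2 (Fin n)) // hasType n M ks Γ ∧ ∀ e ∈ Γ, IsLineEdge v N e} :=
      ⟨runEdges v ks b, hb.hasType_runEdges hv, fun _ => hb.isLineEdge_of_mem_runEdges⟩
    obtain ⟨τ, hτ, hτb⟩ := exists_perm_of_runEdges_eq hv (hrep Γ) hb hks (hrepΓ Γ)
    exact ⟨(Γ, ⟨τ, hτ⟩), Subtype.ext hτb⟩

end Line

section Cycle

variable {n : ℕ} {σ : Equiv.Perm (Fin n)} {s t : Fin n}

theorem orderOf_eq_of_support_eq_univ (hσ : σ.IsCycle) (hsupp : σ.support = Finset.univ) :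
    orderOf σ = n := by
  rw [hσ.orderOf, hsupp, Finset.card_univ, Fintype.card_fin]

theorem pow_eq_one_of_support_eq_univ (hσ : σ.IsCycle) (hsupp : σ.support = Finset.univ) :
    σ ^ n = 1 := by
  simpa only [orderOf_eq_of_support_eq_univ hσ hsupp] using pow_orderOf_eq_one σ

theorem injOn_pow_apply (hσ : σ.IsCycle) (hsupp : σ.support = Finset.univ) (t : Fin n) :
    Set.InjOn (fun l : ℕ => (σ ^ l) t) (Set.Iio n) := fun l hl l' hl' h => by
  have hpow : σ ^ l = σ ^ l' :=
    hσ.pow_eq_pow_iff.2 ⟨t, Equiv.Perm.mem_support.1 (hsupp ▸ Finset.mem_univ t), h⟩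
  have := pow_eq_pow_iff_modEq.1 hpow
  rw [orderOf_eq_of_support_eq_univ hσ hsupp] at this
  exact this.eq_of_lt_of_lt hl hl'

theorem exists_pow_apply_eq (hσ : σ.IsCycle) (hsupp : σ.support = Finset.univ) (t x : Fin n) :
    ∃ l < n, (σ ^ l) t = x := by
  have hmoved (z : Fin n) : σ z ≠ z := Equiv.Perm.mem_support.1 (hsupp ▸ Finset.mem_univ z)
  obtain ⟨i, hi⟩ := hσ.exists_pow_eq (hmoved t) (hmoved x)
  rw [← pow_mod_orderOf, orderOf_eq_of_support_eq_univ hσ hsupp] at hi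
  exact ⟨i % n, Nat.mod_lt _ t.pos, hi⟩

theorem mem_image_iff_exists_pow (hσ : σ.IsCycle) (hsupp : σ.support = Finset.univ) (t : Fin n)
    {e : Sym2 (Fin n)} : e ∈ Finset.image (fun i => s(i, σ i)) Finset.univ ↔
      ∃ l < n, e = s((σ ^ l) t, (σ ^ (l + 1)) t) := by
  simp only [Finset.mem_image, Finset.mem_univ, true_and, pow_succ', Equiv.Perm.mul_apply]
  constructor
  · rintro ⟨i, rfl⟩
    obtain ⟨l, hl, rfl⟩ := exists_pow_apply_eq hσ hsupp t i
    exact ⟨l, hl, rfl⟩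
  · rintro ⟨l, -, rfl⟩
    exact ⟨_, rfl⟩

/-- Numbering the cycle `t = w 0, w 1, …, w (n - 1) = s` with `w l = (σ ^ l) t`, the edges
avoiding `s` and `t` form the path `w 1, …, w (n - 2)`. -/
theorem mem_avoiding_iff_isLineEdge (hσ : σ.IsCycle) (hsupp : σ.support = Finset.univ)
    (hσs : σ s = t) (e : Sym2 (Fin n)) :
    (e ∈ Finset.image (fun i => s(i, σ i)) Finset.univ ∧ s ∉ e ∧ t ∉ e) ↔
      IsLineEdge (fun x => (σ ^ (x + 1)) t) (n - 2) e := by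
  rw [mem_image_iff_exists_pow hσ hsupp t]
  obtain ⟨w, hw⟩ : ∃ w : ℕ → Fin n, ∀ l, (σ ^ l) t = w l := ⟨_, fun _ => rfl⟩
  have hn := t.pos
  have hw0 : w 0 = t := by rw [← hw, pow_zero, Equiv.Perm.one_apply]
  have hwn : w n = t := by
    rw [← hw, pow_eq_one_of_support_eq_univ hσ hsupp, Equiv.Perm.one_apply]
  have hwlast : w (n - 1) = s := σ.injective <| by
    rw [hσs, ← hw, ← Equiv.Perm.mul_apply, ← pow_succ', Nat.sub_add_cancel hn, hw, hwn]
  have hinj : Set.InjOn w (Set.Iio n) := by simpa only [hw] using injOn_pow_apply hσ hsupp t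
  simp only [hw]
  constructor
  · rintro ⟨⟨l, hl, rfl⟩, hs, ht⟩
    simp only [Sym2.mem_iff, not_or] at hs ht
    have : l ≠ 0 := fun h => ht.1 (by rw [h, hw0])
    have : l ≠ n - 1 := fun h => hs.1 (by rw [h, hwlast])
    have : l + 1 ≠ n - 1 := fun h => hs.2 (by rw [h, hwlast])
    have : l + 1 ≠ n := fun h => ht.2 (by rw [h, hwn])
    rcases l with _ | m
    · omega
    · exact ⟨m, by omega, rfl⟩
  · rintro ⟨x, hx, rfl⟩
    refine ⟨⟨x + 1, by omega, rfl⟩, ?_⟩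
    have hne {l l' : ℕ} (hl : l < n) (hl' : l' < n) (h : l ≠ l') : w l ≠ w l' :=
      fun h' => h (hinj hl hl' h')
    rw [← hwlast, ← hw0]
    simp only [Sym2.mem_iff, not_or]
    refine ⟨⟨?_, ?_⟩, ?_, ?_⟩ <;> exact hne (by omega) (by omega) (by omega)

theorem card_avoiding_mul_card_perms {M : ℕ} (ks : Fin M → ℕ) (hks : ∀ j, 1 ≤ ks j)
    (hσ : σ.IsCycle) (hsupp : σ.support = Finset.univ) (hσs : σ s = t) :
    Nat.card {Γ : Finset (Sym2 (Fin n)) // Γ ⊆ Finset.image (fun i => s(i, σ i)) Finset.univ ∧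
        hasType n M ks Γ ∧ ∀ e ∈ Γ, s ∉ e ∧ t ∉ e}
      * Nat.card {τ : Equiv.Perm (Fin M) // ∀ j, ks (τ j) = ks j}
      = (n - 2 - ∑ j, ks j).descFactorial M := by
  have hv : Set.InjOn (fun x => (σ ^ (x + 1)) t) (Set.Iio (n - 2)) := fun x hx x' hx' h => by
    have := injOn_pow_apply hσ hsupp t (Set.mem_Iio.2 (by simp at hx; omega))
      (Set.mem_Iio.2 (by simp at hx'; omega)) h
    omega
  rw [← card_subsets_line_mul_card_perms hv hks]
  congr 1
  refine Nat.card_congr (Equiv.subtypeEquivRight fun Γ => ?_)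
  simp only [Finset.subset_iff, ← mem_avoiding_iff_isLineEdge hσ hsupp hσs]
  constructor
  · rintro ⟨hy, hΓ, hav⟩
    exact ⟨hΓ, fun e he => ⟨hy he, hav e he⟩⟩
  · rintro ⟨hΓ, h⟩
    exact ⟨fun e he => (h e he).1, hΓ, fun e he => (h e he).2⟩

end Cycle

theorem count_path_subsets_in_cycle_avoiding_st_general (n k M : ℕ)
    (ks : Fin M → ℕ) (hks : ∀ j, 1 ≤ ks j) (hsum : ∑ j, ks j = k)
    (y : Finset (Sym2 (Fin n))) (hy : isHamCycle n y)
    (s t : Fin n) (hsty : s(s, t) ∈ y) :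
    Nat.card {Γ : Finset (Sym2 (Fin n)) // Γ ⊆ y ∧ hasType n M ks Γ ∧
        ∀ e ∈ Γ, s ∉ e ∧ t ∉ e}
      * ∏ i ∈ Finset.range (k + 1),
          Nat.factorial (Finset.univ.filter fun j => ks j = i).card
      = Nat.descFactorial (n - 2 - k) M := by
  obtain ⟨σ, hσ, hsupp, rfl⟩ := hy
  have hks_le (j : Fin M) : ks j ≤ k :=
    hsum ▸ Finset.single_le_sum (fun _ _ => Nat.zero_le _) (Finset.mem_univ j)
  rw [← card_perms_preserving_eq_prod_factorial ks hks_le]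
  subst hsum
  obtain ⟨i, -, hi⟩ := Finset.mem_image.1 hsty
  rcases Sym2.eq_iff.1 hi with ⟨rfl, hσs⟩ | ⟨rfl, hσt⟩
  · exact card_avoiding_mul_card_perms ks hks hσ hsupp hσs
  · simp_rw [and_comm (a := s ∉ _)]
    exact card_avoiding_mul_card_perms ks hks hσ hsupp hσt

/-- The number of path subsets of partition type π contained in a fixed Hamiltonian
cycle `y` avoiding both endpoints of a fixed edge `{s,t}` of `y` equals
`(n-2-k)_{(m)} / ∏_j m_j!`. -/
theorem count_path_subsets_in_cycle_avoiding_st (n k M : ℕ) (hM : 1 ≤ M)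
    (ks : Fin M → ℕ) (hks : ∀ j, 1 ≤ ks j) (hsum : ∑ j, ks j = k) (hkM : k + M + 2 ≤ n)
    (y : Finset (Sym2 (Fin n))) (hy : isHamCycle n y)
    (s t : Fin n) (hst : s ≠ t) (hsty : s(s, t) ∈ y) :
    Nat.card {Γ : Finset (Sym2 (Fin n)) // Γ ⊆ y ∧ hasType n M ks Γ ∧
        ∀ e ∈ Γ, s ∉ e ∧ t ∉ e}
      * ∏ i ∈ Finset.range (k + 1),
          Nat.factorial (Finset.univ.filter fun j => ks j = i).card
      = Nat.descFactorial (n - 2 - k) M :=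
  count_path_subsets_in_cycle_avoiding_st_general n k M ks hks hsum y hy s t hsty
end
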